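/- arXiv:2412.09120 — 11 statements merged into one kernel-verified Lean document; each statement's English description precedes it below -/
import Mathlib

section
/- Let λ = (λ_1, …, λ_p) be a partition of r and let d ∈ {1, …, p}, j ∈ {1, …, r}, m ∈ ℤ. Then the pair (j, m) is non-negative of level d with respect to λ if and only if: m ≥ 0 in case λ(j) ≤ d, and m ≥ d − λ(j) in case λ(j) > d. -/
open Finset

/-- The partial sums `μ_t = λ_1 + ⋯ + λ_t` of a tuple `λ : Fin p → ℕ`
(with `μ_0 = 0`); on the Lean side `partialSum lam t = ∑_{i < t} λ_i`
with `0`-based indexing of `λ`. -/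
def partialSum {p : ℕ} (lam : Fin p → ℕ) (t : ℕ) : ℕ :=
  ∑ i ∈ univ.filter (fun i : Fin p => (i : ℕ) < t), lam i

/-- `λ(j) = min { t : μ_t ≥ j }` (for `1 ≤ j ≤ r` this minimum lies in `{1, …, p}`). -/
noncomputable def lamIdx {p : ℕ} (lam : Fin p → ℕ) (j : ℕ) : ℕ :=
  sInf {t : ℕ | j ≤ partialSum lam t}

/-- The pair `(j, m)` is non-negative of level `d` with respect to `λ`:
either `m ≥ 0`, or for every pair of tuples `(j_1, …, j_p) ∈ ℕ^p`, `(m_1, …, m_p) ∈ ℤ^p`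
with `j_k ≤ λ_k`, `Σ j_k = j`, `Σ m_k = m` and `m_k = 0` whenever `j_k = 0`,
either some `m_k > 0`, or there are at least `d` indices `k` with `m_k = 0` and `j_k > 0`. -/
def NonNegOfLevel {p : ℕ} (lam : Fin p → ℕ) (d : ℕ) (j : ℕ) (m : ℤ) : Prop :=
  0 ≤ m ∨
    ∀ (jv : Fin p → ℕ) (mv : Fin p → ℤ),
      (∀ k, jv k ≤ lam k) → (∑ k, jv k) = j → (∑ k, mv k) = m →
      (∀ k, jv k = 0 → mv k = 0) →
      ((∃ k, 0 < mv k) ∨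
        d ≤ (univ.filter (fun k => mv k = 0 ∧ 0 < jv k)).card)

/-!
Write `L = λ(j)`. As `λ` is decreasing, any `s` of its parts sum to at most `μ_s`, so every
decomposition `j = Σ j_k` with `j_k ≤ λ_k` has at least `L` nonzero `j_k`; if all `m_k ≤ 0`, at
most `-m` of the `m_k` are nonzero, which leaves at least `L + m` indices with `m_k = 0 < j_k`.
Conversely the greedy decomposition of `j` is supported exactly on the first `L` indices; putting
`m_k = -1` on the first `L - d` of them and the remaining part of `m` on the next one leaves at
most `d - 1` such indices once `m < min 0 (d - L)`. In ℕ-truncated form both cases of the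
statement read `0 ≤ m + (L - d)`.
-/

section PartialSum

variable {p : ℕ} (lam : Fin p → ℕ)

lemma partialSum_zero : partialSum lam 0 = 0 := by
  simp [partialSum]

lemma partialSum_succ {t : ℕ} (ht : t < p) :
    partialSum lam (t + 1) = partialSum lam t + lam ⟨t, ht⟩ := by
  have : univ.filter (fun k : Fin p => (k : ℕ) < t + 1) =
      insert ⟨t, ht⟩ (univ.filter (fun k : Fin p => (k : ℕ) < t)) := by
    ext k
    simp only [mem_filter, mem_univ, true_and, mem_insert, Fin.ext_iff]
    omega
  rw [partialSum, this, sum_insert (by simp), add_comm, partialSum]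

lemma partialSum_mono : Monotone (partialSum lam) := fun a b hab =>
  sum_le_sum_of_subset fun k => by simp only [mem_filter, mem_univ, true_and]; omega

lemma partialSum_self : partialSum lam p = ∑ k, lam k := by
  rw [partialSum, filter_true_of_mem fun k _ => k.isLt]

lemma sum_le_partialSum_card (hlam : Antitone lam) (S : Finset (Fin p)) :
    ∑ k ∈ S, lam k ≤ partialSum lam #S := by
  induction S using Finset.induction_on_max with
  | empty => simp only [sum_empty, card_empty, partialSum_zero, le_refl]
  | insert a s ha ih =>
    have hs : #s ≤ a := by
      calc #s ≤ #{k : Fin p | (k : ℕ) < a} :=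
            card_le_card fun k hk => mem_filter.2 ⟨mem_univ _, ha k hk⟩
        _ = a := by rw [Fin.card_filter_val_lt]; omega
    have hlam_a : lam a ≤ lam ⟨#s, hs.trans_lt a.isLt⟩ := hlam (Fin.le_def.2 hs)
    have ha_s : a ∉ s := fun h => lt_irrefl a (ha a h)
    rw [sum_insert ha_s, card_insert_of_notMem ha_s, partialSum_succ lam (hs.trans_lt a.isLt)]
    omega

end PartialSum

section LamIdx

variable {p : ℕ} (lam : Fin p → ℕ) {j t : ℕ}

lemma lamIdx_le (h : j ≤ partialSum lam t) : lamIdx lam j ≤ t :=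
  Nat.sInf_le h

lemma le_partialSum_lamIdx (h : j ≤ partialSum lam t) : j ≤ partialSum lam (lamIdx lam j) :=
  Nat.sInf_mem (s := {t | j ≤ partialSum lam t}) ⟨t, h⟩

lemma lamIdx_pos (hj : 0 < j) (h : j ≤ partialSum lam t) : 0 < lamIdx lam j := by
  refine Nat.pos_of_ne_zero fun h0 => ?_
  have := le_partialSum_lamIdx lam h
  rw [h0, partialSum_zero] at this
  omega

lemma lamIdx_sum_le_card_support (hlam : Antitone lam) {jv : Fin p → ℕ}
    (hle : ∀ k, jv k ≤ lam k) : lamIdx lam (∑ k, jv k) ≤ #{k | 0 < jv k} := by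
  apply lamIdx_le
  calc ∑ k, jv k = ∑ k with 0 < jv k, jv k :=
        (sum_filter_of_ne fun k _ h => Nat.pos_of_ne_zero h).symm
    _ ≤ ∑ k with 0 < jv k, lam k := sum_le_sum fun k _ => hle k
    _ ≤ partialSum lam #{k | 0 < jv k} := sum_le_partialSum_card lam hlam _

lemma exists_le_sum_eq_pos_iff_lt_lamIdx (hlam : Antitone lam) (hj : j ≤ partialSum lam p) :
    ∃ jv : Fin p → ℕ, (∀ k, jv k ≤ lam k) ∧ ∑ k, jv k = j ∧
      ∀ k, 0 < jv k ↔ (k : ℕ) < lamIdx lam j := by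
  set g : ℕ → ℕ := fun i => min (partialSum lam i) j
  have hg : Monotone g := fun a b h => min_le_min_right _ (partialSum_mono lam h)
  set jv : Fin p → ℕ := fun k => g (k + 1) - g k
  have hle : ∀ k, jv k ≤ lam k := fun k => by
    simp only [jv, g, partialSum_succ lam k.isLt, Fin.eta]
    omega
  have hsum : ∑ k, jv k = j := by
    rw [Fin.sum_univ_eq_sum_range (fun i => g (i + 1) - g i), sum_range_tsub hg]
    simp [g, partialSum_zero, hj]
  have hsub : ({k | 0 < jv k} : Finset (Fin p)) ⊆
      ({k | (k : ℕ) < lamIdx lam j} : Finset (Fin p)) := fun k => by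
    simp only [mem_filter, mem_univ, true_and]
    refine fun hk => not_le.1 fun hLk => ?_
    have h1 := (le_partialSum_lamIdx lam hj).trans (partialSum_mono lam hLk)
    have h2 := partialSum_mono lam (Nat.le_succ k)
    simp only [jv, g] at hk
    omega
  have hcard : #{k : Fin p | (k : ℕ) < lamIdx lam j} ≤ #{k | 0 < jv k} := by
    rw [Fin.card_filter_val_lt, ← hsum]
    exact (min_le_right _ _).trans (lamIdx_sum_le_card_support lam hlam hle)
  -- the greedy support lies in `{k < λ(j)}` and, like any decomposition's, has `≥ λ(j)` elements
  refine ⟨jv, hle, hsum, fun k => ?_⟩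
  simpa using Finset.ext_iff.1 (eq_of_subset_of_card_le hsub hcard) k

end LamIdx

lemma card_filter_ne_zero_le_neg_sum {ι : Type*} (s : Finset ι) {f : ι → ℤ}
    (hf : ∀ i ∈ s, f i ≤ 0) : (#{i ∈ s | f i ≠ 0} : ℤ) ≤ -∑ i ∈ s, f i := by
  rw [← sum_neg_distrib, card_filter, Nat.cast_sum]
  refine sum_le_sum fun i hi => ?_
  have := hf i hi
  split_ifs <;> push_cast <;> omega

section NonNegOfLevel

variable {p : ℕ} {lam : Fin p → ℕ} {d j : ℕ} {m : ℤ}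

theorem nonNegOfLevel_of_le (hlam : Antitone lam) (h : 0 ≤ m + (lamIdx lam j - d : ℕ)) :
    NonNegOfLevel lam d j m := by
  refine or_iff_not_imp_left.2 fun hm jv mv hle hjv hmv _ => or_iff_not_imp_left.2 fun hpos => ?_
  push Not at hm hpos
  have hL := lamIdx_sum_le_card_support lam hlam hle
  have hN := card_filter_ne_zero_le_neg_sum univ fun k _ => hpos k
  have hS : #{k | 0 < jv k} ≤ #{k | mv k = 0 ∧ 0 < jv k} + #{k | mv k ≠ 0} := by
    refine (card_le_card fun k => ?_).trans (card_union_le _ _)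
    simp only [mem_filter, mem_union, mem_univ, true_and]
    tauto
  rw [hjv] at hL
  rw [hmv] at hN
  omega

theorem le_of_nonNegOfLevel (hlam : Antitone lam) (hd : 1 ≤ d) (hj : 1 ≤ j)
    (hjp : j ≤ partialSum lam p) (h : NonNegOfLevel lam d j m) :
    0 ≤ m + (lamIdx lam j - d : ℕ) := by
  by_contra! hneg
  obtain ⟨jv, hle, hjv, hsupp⟩ := exists_le_sum_eq_pos_iff_lt_lamIdx lam hlam hjp
  set L := lamIdx lam j
  set c := L - d with hc
  have hcL : c < L := by have := lamIdx_pos lam hj hjp; omega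
  have hcp : c < p := hcL.trans_le (lamIdx_le lam hjp)
  -- `c + 1` nonzero entries in the support `{k < L}` leave only `L - c - 1 < d` zeros there
  set mv : Fin p → ℤ := fun k => if (k : ℕ) < c then -1 else if k = ⟨c, hcp⟩ then m + c else 0
  have hmv : ∑ k, mv k = m := by
    rw [sum_ite, sum_const, Fin.card_filter_val_lt, min_eq_right hcp.le, sum_ite_eq',
      if_pos (by simp)]
    simp
  have hmv_nonpos : ∀ k, mv k ≤ 0 := fun k => by
    simp only [mv]
    split_ifs <;> omega
  have hzero : ∀ k, jv k = 0 → mv k = 0 := fun k hk => by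
    have := (hsupp k).not.1 (by omega)
    simp only [mv, Fin.ext_iff]
    split_ifs <;> omega
  rcases h with hm | h
  · omega
  rcases h jv mv hle hjv hmv hzero with ⟨k, hk⟩ | hcard
  · exact absurd hk (hmv_nonpos k).not_gt
  have hsub : ({k | mv k = 0 ∧ 0 < jv k} : Finset (Fin p)) ⊆
      ({k | (k : ℕ) < L} : Finset (Fin p)) \ ({k | (k : ℕ) < c + 1} : Finset (Fin p)) :=
    fun k => by
      simp only [mem_filter, mem_sdiff, mem_univ, true_and, hsupp, mv, Fin.ext_iff]
      rintro ⟨hmk, hk⟩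
      split_ifs at hmk <;> omega
  have := card_le_card hsub
  rw [card_sdiff_of_subset (fun k => by simp only [mem_filter, mem_univ, true_and]; omega),
    Fin.card_filter_val_lt, Fin.card_filter_val_lt] at this
  omega

end NonNegOfLevel

theorem stmt1_general (r p : ℕ) (lam : Fin p → ℕ)
    (hanti : ∀ k l : Fin p, k ≤ l → lam l ≤ lam k)
    (hsum : ∑ k, lam k = r)
    (d : ℕ) (hd1 : 1 ≤ d)
    (j : ℕ) (hj1 : 1 ≤ j) (hjr : j ≤ r) (m : ℤ) :
    NonNegOfLevel lam d j m ↔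
      (if lamIdx lam j ≤ d then 0 ≤ m else (d : ℤ) - (lamIdx lam j : ℤ) ≤ m) := by
  have hlam : Antitone lam := fun k l => hanti k l
  have hjp : j ≤ partialSum lam p := by rwa [partialSum_self, hsum]
  have hcond : (if lamIdx lam j ≤ d then 0 ≤ m else (d : ℤ) - (lamIdx lam j : ℤ) ≤ m) ↔
      0 ≤ m + (lamIdx lam j - d : ℕ) := by
    split_ifs <;> omega
  rw [hcond]
  exact ⟨le_of_nonNegOfLevel hlam hd1 hj1 hjp, nonNegOfLevel_of_le hlam⟩

/-- The pair `(j, m)` is non-negative of level `d` with respect to the partition `λ`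
if and only if `m ≥ 0` when `λ(j) ≤ d`, and `m ≥ d − λ(j)` when `λ(j) > d`. -/
theorem stmt1 (r p : ℕ) (hp : 1 ≤ p) (lam : Fin p → ℕ)
    (hpos : ∀ k, 1 ≤ lam k) (hanti : ∀ k l : Fin p, k ≤ l → lam l ≤ lam k)
    (hsum : ∑ k, lam k = r)
    (d : ℕ) (hd1 : 1 ≤ d) (hdp : d ≤ p)
    (j : ℕ) (hj1 : 1 ≤ j) (hjr : j ≤ r) (m : ℤ) :
    NonNegOfLevel lam d j m ↔
      (if lamIdx lam j ≤ d then 0 ≤ m else (d : ℤ) - (lamIdx lam j : ℤ) ≤ m) :=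
  stmt1_general r p lam hanti hsum d hd1 j hj1 hjr m
end

section
/- Let R be a commutative ring, let σ be a finite type with r elements, let u : σ → R be any function and let W' be any function from finite subsets of σ to R. Define W on finite subsets of σ by W(Z) = Σ_{A ⊆ Z} (∏_{a ∈ A} u(a)) · W'(Z \ A). Then for every z_0 ∈ σ: Σ over subsets Z of σ containing z_0 of W'(Z) · ∏_{z' ∉ Z} (u(z') − u(z_0)) equals Σ over all subsets Z of σ of W(Z) · (−u(z_0))^{r − |Z|}. -/
/-!
Expanding `∏_{z ∉ Y} (u z - c)` over the subsets `A` of the complement of `Y` turns both sides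
into sums over pairs `(Y, A)` of disjoint subsets, the right-hand side through `Z = Y ∪ A`.
For `c = u z₀` the terms with `z₀ ∉ Y` on the left contain the factor `u z₀ - u z₀ = 0`.
-/

open Finset

namespace Finset

variable {α R M : Type*} [DecidableEq α]

theorem sum_powerset_sum_powerset_eq_sum_powerset_sum_powerset_sdiff [AddCommMonoid M]
    (s : Finset α) (F : Finset α → Finset α → M) :
    ∑ Z ∈ s.powerset, ∑ A ∈ Z.powerset, F Z A
      = ∑ Y ∈ s.powerset, ∑ A ∈ (s \ Y).powerset, F (Y ∪ A) A := by
  rw [sum_sigma', sum_sigma']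
  refine sum_bij' (fun p _ => ⟨p.1 \ p.2, p.2⟩) (fun p _ => ⟨p.1 ∪ p.2, p.2⟩) ?_ ?_ ?_ ?_ ?_
  all_goals
    rintro ⟨Z, A⟩ h
    simp only [mem_sigma, mem_powerset] at h
  · simp only [mem_sigma, mem_powerset]
    exact ⟨sdiff_subset.trans h.1, fun a ha => by simp [h.1 (h.2 ha), ha]⟩
  · simp only [mem_sigma, mem_powerset]
    exact ⟨union_subset h.1 (h.2.trans sdiff_subset), subset_union_right⟩
  · simp [sdiff_union_of_subset h.2]
  · simp [union_sdiff_cancel_right (disjoint_of_subset_right h.2 disjoint_sdiff)]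
  · simp [sdiff_union_of_subset h.2]

variable [CommRing R]

theorem prod_sub_const_eq_sum_powerset (s : Finset α) (f : α → R) (c : R) :
    ∏ i ∈ s, (f i - c) = ∑ A ∈ s.powerset, (∏ i ∈ A, f i) * (-c) ^ (#s - #A) := by
  simp_rw [sub_eq_add_neg, prod_add]
  refine sum_congr rfl fun A hA => ?_
  rw [prod_const, card_sdiff_of_subset (mem_powerset.mp hA)]

theorem sum_powerset_mul_prod_sub_const (s : Finset α) (u : α → R) (W' : Finset α → R) (c : R) :
    ∑ Y ∈ s.powerset, W' Y * ∏ z ∈ s \ Y, (u z - c)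
      = ∑ Z ∈ s.powerset,
          (∑ A ∈ Z.powerset, (∏ a ∈ A, u a) * W' (Z \ A)) * (-c) ^ (#s - #Z) := by
  simp_rw [sum_mul, sum_powerset_sum_powerset_eq_sum_powerset_sum_powerset_sdiff,
    prod_sub_const_eq_sum_powerset, mul_sum]
  refine sum_congr rfl fun Y hY => sum_congr rfl fun A hA => ?_
  have hYA : Disjoint Y A := disjoint_of_subset_right (mem_powerset.mp hA) disjoint_sdiff
  rw [union_sdiff_cancel_right hYA, card_union_of_disjoint hYA,
    card_sdiff_of_subset (mem_powerset.mp hY), Nat.sub_sub]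
  ring

end Finset

/-- The combinatorial identity underlying the topological recursion formula:
if `W Z = Σ_{A ⊆ Z} (∏_{a ∈ A} u a) · W' (Z \ A)`, then for any `z₀`,
`Σ_{z₀ ∈ Z ⊆ σ} W'(Z) ∏_{z' ∉ Z} (u z' − u z₀) = Σ_{Z ⊆ σ} W(Z) · (−u z₀)^{r − |Z|}`. -/
theorem stmt4 {R : Type*} [CommRing R] (σ : Type*) [Fintype σ] [DecidableEq σ]
    (r : ℕ) (hcard : Fintype.card σ = r)
    (u : σ → R) (W' W : Finset σ → R)
    (hW : ∀ Z : Finset σ, W Z = ∑ A ∈ Z.powerset, (∏ a ∈ A, u a) * W' (Z \ A))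
    (z0 : σ) :
    ∑ Z ∈ (univ : Finset σ).powerset.filter (fun Z => z0 ∈ Z),
        W' Z * ∏ z' ∈ (univ : Finset σ) \ Z, (u z' - u z0)
      = ∑ Z ∈ (univ : Finset σ).powerset, W Z * (-u z0) ^ (r - Z.card) := by
  have hvanish : ∀ Z : Finset σ, z0 ∉ Z → W' Z * ∏ z' ∈ univ \ Z, (u z' - u z0) = 0 :=
    fun Z hZ => mul_eq_zero_of_right _ (prod_eq_zero (by simpa using hZ) (sub_self _))
  rw [sum_filter_of_ne fun Z _ hne => by_contra fun hZ => hne (hvanish Z hZ),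
    sum_powerset_mul_prod_sub_const, ← hcard, ← card_univ]
  simp_rw [hW]
end

section
/- Let l ≥ 1 and let a_1, …, a_l and b_1, …, b_l be natural numbers with a_i ≥ 1 for every i and a_1 + … + a_l ≥ 2. Set n = b_1 + … + b_l. Then, as an inequality of integers, Σ_{i=1}^l ( min(n, a_i + b_i) − 2 + [a_i + b_i = 1] ) + (a_1 + … + a_l) − n ≥ 0, where [P] equals 1 if P holds and 0 otherwise. -/
open Finset

/-- First counting inequality for the leading order property: if `a_i ≥ 1`,
`Σ a_i ≥ 2` and `n = Σ b_i`, then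
`Σ_i (min(n, a_i + b_i) − 2 + [a_i + b_i = 1]) + Σ a_i − n ≥ 0` in `ℤ`. -/
theorem stmt5 (l : ℕ) (hl : 1 ≤ l) (a b : Fin l → ℕ)
    (ha : ∀ i, 1 ≤ a i) (ha2 : 2 ≤ ∑ i, a i)
    (n : ℕ) (hn : n = ∑ i, b i) :
    0 ≤ (∑ i, ((min n (a i + b i) : ℤ) - 2 + if a i + b i = 1 then 1 else 0))
        + (∑ i, (a i : ℤ)) - (n : ℤ) := by
  have hbn : ∀ i, b i ≤ n := by
    intro i
    rw [hn]
    exact Finset.single_le_sum (fun j _ => Nat.zero_le _) (mem_univ i)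
  have hsum : (∑ i, ((min n (a i + b i) : ℤ) - 2 + if a i + b i = 1 then 1 else 0))
        + (∑ i, (a i : ℤ)) - (n : ℤ)
      = ∑ i, (((min n (a i + b i) : ℤ) - 2 + (if a i + b i = 1 then 1 else 0))
          + (a i : ℤ) - (b i : ℤ)) := by
    have hcast : ((n : ℤ)) = ∑ i, (b i : ℤ) := by rw [hn]; push_cast; ring
    simp only [Finset.sum_add_distrib, Finset.sum_sub_distrib, ← hcast]
  rw [hsum]
  by_cases hbad : ∃ i, a i = 1 ∧ b i = n ∧ 1 ≤ n
  · obtain ⟨i₀, ha1, hb1, hn1⟩ := hbad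
    have hb0 : ∀ j ∈ univ.erase i₀, b j = 0 := by
      have h1 : b i₀ + ∑ j ∈ univ.erase i₀, b j = ∑ j, b j :=
        Finset.add_sum_erase univ b (mem_univ i₀)
      have h2 : ∑ j ∈ univ.erase i₀, b j = 0 := by omega
      intro j hj
      exact (Finset.sum_eq_zero_iff.mp h2) j hj
    have hane : (univ.erase i₀).Nonempty := by
      by_contra hne
      rw [Finset.not_nonempty_iff_eq_empty] at hne
      have h1 : a i₀ + ∑ j ∈ univ.erase i₀, a j = ∑ j, a j :=
        Finset.add_sum_erase univ a (mem_univ i₀)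
      rw [hne, Finset.sum_empty] at h1
      omega
    rw [← Finset.add_sum_erase univ _ (mem_univ i₀)]
    have hterm : ∀ j ∈ univ.erase i₀,
        (1 : ℤ) ≤ ((min n (a j + b j) : ℤ) - 2 + (if a j + b j = 1 then 1 else 0))
          + (a j : ℤ) - (b j : ℤ) := by
      intro j hj
      have hbj := hb0 j hj
      have haj := ha j
      split <;> omega
    have hsum1 : ((univ.erase i₀).card : ℤ) ≤ ∑ j ∈ univ.erase i₀,
        (((min n (a j + b j) : ℤ) - 2 + (if a j + b j = 1 then 1 else 0))
          + (a j : ℤ) - (b j : ℤ)) := by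
      calc ((univ.erase i₀).card : ℤ) = ∑ _j ∈ univ.erase i₀, (1 : ℤ) := by simp
        _ ≤ _ := Finset.sum_le_sum hterm
    have hcard : 1 ≤ ((univ.erase i₀).card : ℤ) := by
      have := Finset.card_pos.mpr hane
      omega
    have hi₀ : (-1 : ℤ) ≤ ((min n (a i₀ + b i₀) : ℤ) - 2 + (if a i₀ + b i₀ = 1 then 1 else 0))
          + (a i₀ : ℤ) - (b i₀ : ℤ) := by
      split <;> omega
    linarith
  · push_neg at hbad
    apply Finset.sum_nonneg
    intro i _
    have h1 := hbad i
    have h2 := hbn i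
    have h3 := ha i
    split <;> omega
end

section
/- Let l ≥ 1 and let a_1, …, a_l and b_1, …, b_l be natural numbers with a_i ≥ 1 for every i and a_1 + … + a_l ≥ 2. Set m = b_1 + … + b_l, and let n be an integer with 2 ≤ n ≤ m. For c ∈ ℕ define f(c) = 0 if c = 1, f(c) = c − 2 if 2 ≤ c ≤ n, f(c) = n − 1 if n < c ≤ m, and f(c) = n − 2 if c > m. Then, as an inequality of integers, Σ_{i=1}^l f(a_i + b_i) + (a_1 + … + a_l) − n ≥ 0. -/
open Finset

/-- Second counting inequality for the leading order property: with `a_i ≥ 1`,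
`Σ a_i ≥ 2`, `m = Σ b_i` and `2 ≤ n ≤ m`, and
`f(c) = 0` if `c = 1`, `c − 2` if `2 ≤ c ≤ n`, `n − 1` if `n < c ≤ m`, `n − 2` if `c > m`,
one has `Σ_i f(a_i + b_i) + Σ a_i − n ≥ 0` in `ℤ`. -/
theorem stmt6 (l : ℕ) (hl : 1 ≤ l) (a b : Fin l → ℕ)
    (ha : ∀ i, 1 ≤ a i) (ha2 : 2 ≤ ∑ i, a i)
    (m : ℕ) (hm : m = ∑ i, b i)
    (n : ℕ) (hn2 : 2 ≤ n) (hnm : n ≤ m) :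
    0 ≤ (∑ i, (if a i + b i = 1 then (0 : ℤ)
          else if a i + b i ≤ n then ((a i + b i : ℕ) : ℤ) - 2
          else if a i + b i ≤ m then (n : ℤ) - 1
          else (n : ℤ) - 2))
        + (∑ i, (a i : ℤ)) - (n : ℤ) := by
  by_cases hc : ∃ i, n < a i + b i
  · obtain ⟨i, hi⟩ := hc
    have hterm : ∀ j ∈ Finset.univ, (0:ℤ) ≤ (if a j + b j = 1 then (0 : ℤ)
          else if a j + b j ≤ n then ((a j + b j : ℕ) : ℤ) - 2
          else if a j + b j ≤ m then (n : ℤ) - 1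
          else (n : ℤ) - 2) := by
      intro j _
      have := ha j
      split_ifs <;> omega
    have hfi : (n:ℤ) - 2 ≤ (if a i + b i = 1 then (0 : ℤ)
          else if a i + b i ≤ n then ((a i + b i : ℕ) : ℤ) - 2
          else if a i + b i ≤ m then (n : ℤ) - 1
          else (n : ℤ) - 2) := by
      split_ifs <;> omega
    have hsum := Finset.single_le_sum hterm (Finset.mem_univ i)
    have hA : (2:ℤ) ≤ ∑ i, (a i : ℤ) := by exact_mod_cast ha2
    linarith
  · push_neg at hc
    have key : ∀ j ∈ Finset.univ, (b j : ℤ) ≤ (if a j + b j = 1 then (0 : ℤ)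
          else if a j + b j ≤ n then ((a j + b j : ℕ) : ℤ) - 2
          else if a j + b j ≤ m then (n : ℤ) - 1
          else (n : ℤ) - 2) + (a j : ℤ) := by
      intro j _
      have := ha j
      have := hc j
      split_ifs <;> omega
    have hs := Finset.sum_le_sum key
    rw [Finset.sum_add_distrib] at hs
    have hb : ∑ j, ((b j : ℤ)) = (m : ℤ) := by rw [hm]; push_cast; ring
    rw [hb] at hs
    have hnm' : (n:ℤ) ≤ (m:ℤ) := by exact_mod_cast hnm
    linarith
end

section
/- Fix integers r ≥ 2 and s with 1 ≤ s ≤ r, and let z be a nonzero complex number. Then the characteristic polynomial of the Higgs matrix M(z) equals X^r − z^{r(s−r)}, i.e. charpoly(M(z)) = X^r − C(z^{r(s−r)}) in ℂ[X]. -/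
open Finset Matrix Polynomial

/-- `⌊α_k⌋ = ⌊k(r−s)/r⌋`. -/
noncomputable def alphaFloor (r s k : ℕ) : ℤ :=
  ⌊((k : ℚ) * ((r : ℚ) - (s : ℚ))) / (r : ℚ)⌋

/-- The Higgs matrix `M(z)` of the `(r,s)` quantum curve: the `r × r` complex matrix
with `M(z)_{k,k+1} = z^{r(⌊α_{r−k}⌋ − ⌊α_{r+1−k}⌋)}` for `1 ≤ k ≤ r−1`,
`M(z)_{r,1} = z^{−r⌊α_1⌋}`, and all other entries `0` (indices `0`-based in Lean). -/
noncomputable def higgs (r s : ℕ) (z : ℂ) : Matrix (Fin r) (Fin r) ℂ :=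
  Matrix.of fun i j =>
    if (i : ℕ) + 1 = (j : ℕ) then
      z ^ ((r : ℤ) * (alphaFloor r s (r - 1 - (i : ℕ)) - alphaFloor r s (r - (i : ℕ))))
    else if (i : ℕ) = r - 1 ∧ (j : ℕ) = 0 then
      z ^ (-(r : ℤ) * alphaFloor r s 1)
    else 0

lemma alphaFloor_one {r s : ℕ} (hs1 : 1 ≤ s) (hsr : s ≤ r) : alphaFloor r s 1 = 0 := by
  have hr : 1 ≤ r := le_trans hs1 hsr
  have hr0 : (0:ℚ) < r := by exact_mod_cast hr
  have hs0 : (1:ℚ) ≤ s := by exact_mod_cast hs1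
  have hsr' : (s:ℚ) ≤ r := by exact_mod_cast hsr
  unfold alphaFloor
  rw [Nat.cast_one, one_mul, Int.floor_eq_zero_iff, Set.mem_Ico]
  constructor
  · apply div_nonneg _ (le_of_lt hr0)
    linarith
  · rw [div_lt_one hr0]
    linarith

lemma alphaFloor_top {r s : ℕ} (hr : 1 ≤ r) : alphaFloor r s r = (r:ℤ) - s := by
  have hr0 : (r:ℚ) ≠ 0 := by
    have : (0:ℚ) < r := by exact_mod_cast hr
    exact ne_of_gt this
  unfold alphaFloor
  rw [mul_comm, mul_div_assoc, div_self hr0, mul_one]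
  rw [show ((r:ℚ) - s) = (((r:ℤ) - s : ℤ) : ℚ) by push_cast; ring, Int.floor_intCast]

lemma prod_zpow_sum {z : ℂ} (hz : z ≠ 0) (f : ℕ → ℤ) (n : ℕ) :
    ∏ j ∈ Finset.range n, z ^ f j = z ^ (∑ j ∈ Finset.range n, f j) := by
  induction n with
  | zero => simp
  | succ n ih => rw [Finset.prod_range_succ, Finset.sum_range_succ, ih, zpow_add₀ hz]

/-- The characteristic polynomial of the Higgs matrix is `X^r − z^{r(s−r)}`. -/
theorem stmt7 (r s : ℕ) (hr : 2 ≤ r) (hs1 : 1 ≤ s) (hsr : s ≤ r)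
    (z : ℂ) (hz : z ≠ 0) :
    (higgs r s z).charpoly = X ^ r - C (z ^ ((r : ℤ) * ((s : ℤ) - (r : ℤ)))) := by
  obtain ⟨n, rfl⟩ : ∃ n, r = n + 1 := ⟨r - 1, by omega⟩
  have hn : 1 ≤ n := by omega
  set M := higgs (n+1) s z with hM
  -- entry facts
  have hMdiag : ∀ i : Fin (n+1), M i i = 0 := by
    intro i
    simp only [hM, higgs, Matrix.of_apply]
    rw [if_neg (by omega), if_neg (by rintro ⟨h1, h2⟩; omega)]
  have hlast0 : M (Fin.last n) 0 = 1 := by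
    simp only [hM, higgs, Matrix.of_apply, Fin.val_last, Fin.val_zero]
    rw [if_neg (by omega), if_pos ⟨by omega, trivial⟩, alphaFloor_one hs1 hsr]
    simp
  unfold Matrix.charpoly
  rw [Matrix.det_succ_column_zero]
  rw [Finset.sum_eq_add_of_mem 0 (Fin.last n) (Finset.mem_univ _) (Finset.mem_univ _)
      (by simp [Fin.ext_iff]; omega)
      (by
        intro c _ hc
        obtain ⟨hc0', hcl'⟩ := hc
        have h1 : (c:ℕ) ≠ 0 := fun h => hc0' (Fin.ext h)
        have h2 : (c:ℕ) ≠ n := fun h => hcl' (Fin.ext h)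
        have : M c 0 = 0 := by
          simp only [hM, higgs, Matrix.of_apply, Fin.val_zero]
          rw [if_neg (by omega), if_neg (by rintro ⟨ha, hb⟩; omega)]
        rw [charmatrix_apply_ne _ _ _ hc0', this]
        simp)]
  -- term at 0
  have h00 : charmatrix M 0 0 = X := by
    rw [charmatrix_apply_eq, hMdiag, map_zero, sub_zero]
  have hminor0 : ((charmatrix M).submatrix (Fin.succAbove 0) Fin.succ).det = X ^ n := by
    rw [Matrix.det_of_upperTriangular]
    · rw [Finset.prod_congr rfl (fun i _ => ?_), Finset.prod_const, Finset.card_univ,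
        Fintype.card_fin]
      rw [Matrix.submatrix_apply, Fin.succAbove_zero, charmatrix_apply_eq, hMdiag, map_zero,
        sub_zero]
    · intro i j hij
      have hij' : (j:ℕ) < (i:ℕ) := hij
      rw [Matrix.submatrix_apply, Fin.succAbove_zero]
      have hne : (i.succ : Fin (n+1)) ≠ j.succ := by
        simp only [ne_eq, Fin.ext_iff, Fin.val_succ]; omega
      rw [charmatrix_apply_ne _ _ _ hne]
      have : M i.succ j.succ = 0 := by
        simp only [hM, higgs, Matrix.of_apply, Fin.val_succ]
        rw [if_neg (by omega), if_neg (by rintro ⟨ha, hb⟩; omega)]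
      rw [this, map_zero, neg_zero]
  -- term at last
  have hAlast : charmatrix M (Fin.last n) 0 = -1 := by
    rw [charmatrix_apply_ne _ _ _ (by simp [Fin.ext_iff]; omega), hlast0, Polynomial.C_1]
  have hminorlast :
      ((charmatrix M).submatrix (Fin.succAbove (Fin.last n)) Fin.succ).det
        = (-1) ^ n * C (z ^ (((n+1 : ℕ) : ℤ) * ((s:ℤ) - ((n+1 : ℕ) : ℤ)))) := by
    rw [Matrix.det_of_lowerTriangular]
    · have hdiag : ∀ i : Fin n,
          ((charmatrix M).submatrix (Fin.succAbove (Fin.last n)) Fin.succ) i i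
            = -C (z ^ (((n+1 : ℕ) : ℤ) * (alphaFloor (n+1) s (n + 1 - 1 - (i:ℕ))
                - alphaFloor (n+1) s (n + 1 - (i:ℕ))))) := by
        intro i
        rw [Matrix.submatrix_apply, Fin.succAbove_last]
        have hne : (i.castSucc : Fin (n+1)) ≠ i.succ := by
          simp [Fin.ext_iff]
        rw [charmatrix_apply_ne _ _ _ hne]
        congr 1
        simp only [hM, higgs, Matrix.of_apply, Fin.coe_castSucc, Fin.val_succ, if_true]
      rw [Finset.prod_congr rfl (fun i _ => hdiag i)]
      have hneg : ∀ i : Fin n, -C (z ^ (((n+1 : ℕ) : ℤ) * (alphaFloor (n+1) s (n + 1 - 1 - (i:ℕ))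
            - alphaFloor (n+1) s (n + 1 - (i:ℕ))))) = (-1:ℂ[X]) * C (z ^ (((n+1 : ℕ) : ℤ) *
            (alphaFloor (n+1) s (n + 1 - 1 - (i:ℕ)) - alphaFloor (n+1) s (n + 1 - (i:ℕ))))) :=
        fun i => (neg_one_mul _).symm
      rw [Finset.prod_congr rfl (fun i _ => hneg i)]
      rw [Finset.prod_mul_distrib, Finset.prod_const, Finset.card_univ, Fintype.card_fin,
        ← map_prod]
      congr 2
      rw [Fin.prod_univ_eq_prod_range
        (fun j => z ^ (((n+1 : ℕ) : ℤ) * (alphaFloor (n+1) s (n + 1 - 1 - j)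
            - alphaFloor (n+1) s (n + 1 - j))))]
      rw [prod_zpow_sum hz]
      congr 1
      have htel : ∑ j ∈ Finset.range n,
          (alphaFloor (n+1) s (n + 1 - (j+1)) - alphaFloor (n+1) s (n + 1 - j))
          = alphaFloor (n+1) s (n + 1 - n) - alphaFloor (n+1) s (n + 1 - 0) :=
        Finset.sum_range_sub (fun j => alphaFloor (n+1) s (n + 1 - j)) n
      have hrw : ∀ j ∈ Finset.range n,
          (((n+1 : ℕ) : ℤ) * (alphaFloor (n+1) s (n + 1 - 1 - j) - alphaFloor (n+1) s (n + 1 - j)))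
          = (((n+1 : ℕ) : ℤ)) * (alphaFloor (n+1) s (n + 1 - (j+1)) - alphaFloor (n+1) s (n + 1 - j)) := by
        intro j hj
        congr 3
        omega
      rw [Finset.sum_congr rfl hrw, ← Finset.mul_sum, htel]
      have h1 : n + 1 - n = 1 := by omega
      have h2 : n + 1 - 0 = n + 1 := by omega
      rw [h1, h2, alphaFloor_one hs1 hsr, alphaFloor_top (by omega)]
      push_cast
      ring
    · intro i j hij
      have hij' : (i:ℕ) < (j:ℕ) := hij
      rw [Matrix.submatrix_apply, Fin.succAbove_last]
      have hne : (i.castSucc : Fin (n+1)) ≠ j.succ := by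
        simp only [ne_eq, Fin.ext_iff, Fin.coe_castSucc, Fin.val_succ]; omega
      rw [charmatrix_apply_ne _ _ _ hne]
      have : M i.castSucc j.succ = 0 := by
        simp only [hM, higgs, Matrix.of_apply, Fin.coe_castSucc, Fin.val_succ]
        rw [if_neg (by omega), if_neg (by rintro ⟨ha, hb⟩; omega)]
      rw [this, map_zero, neg_zero]
  rw [h00, hminor0, hAlast, hminorlast]
  simp only [Fin.val_zero, Fin.val_last, pow_zero, one_mul]
  have hsq : ((-1 : ℂ[X]) ^ n) * ((-1 : ℂ[X]) ^ n) = 1 := by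
    rw [← pow_add, ← two_mul, pow_mul]
    norm_num
  rw [show ((-1:ℂ[X])^n) * (-1) * (((-1:ℂ[X])^n)
        * C (z ^ (((n+1 : ℕ) : ℤ) * ((s:ℤ) - ((n+1 : ℕ) : ℤ))))) =
      (((-1:ℂ[X])^n) * ((-1:ℂ[X])^n))
        * (-(C (z ^ (((n+1 : ℕ) : ℤ) * ((s:ℤ) - ((n+1 : ℕ) : ℤ)))))) from by ring,
    hsq, one_mul, ← pow_succ', ← sub_eq_add_neg]
end

section
/- Fix integers r ≥ 2 and s with 1 ≤ s ≤ r, let z be a nonzero complex number, and let θ = exp(2πi/r). Then the Higgs matrix M(z) is diagonalizable with eigenvalues θ^0 z^{s−r}, θ^1 z^{s−r}, …, θ^{r−1} z^{s−r}: there exists an invertible r×r complex matrix V with M(z) = V · diag(θ^0 z^{s−r}, …, θ^{r−1} z^{s−r}) · V^{−1}. -/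
/-!
`M(z)` is a weighted cyclic shift, `M e_{i+1} = w_i e_i` with indices mod `r`, whose weights
`w_k = z^{r(⌊α_{r-1-k}⌋ - ⌊α_{r-k}⌋)}` have telescoping exponents, so
`∏ w_k = z^{-r⌊α_r⌋} = z^{r(s-r)}`. For every `μ` with `μ^r = ∏ w_k` the vector
`(μ^i / ∏_{k<i} w_k)_i` is a `μ`-eigenvector of such a shift. The `r` distinct `r`-th roots
`θ^j z^{s-r}` of `z^{r(s-r)}` therefore give an eigenvector matrix, which is a Vandermonde matrix
rescaled by an invertible diagonal matrix.
-/

open Finset Matrix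

section WeightedCyclicShift

variable {K : Type*} [Field K] {n : ℕ}

def weightedCyclicShift (n : ℕ) (w : ℕ → K) : Matrix (Fin n) (Fin n) K :=
  of fun i j ↦ if (j : ℕ) = ((i : ℕ) + 1) % n then w i else 0

def cyclicShiftEigenvector (w : ℕ → K) (μ : K) (i : Fin n) : K :=
  μ ^ (i : ℕ) / ∏ k ∈ range i, w k

theorem weightedCyclicShift_mulVec_apply (w : ℕ → K) (v : Fin n → K) (i : Fin n) :
    (weightedCyclicShift n w *ᵥ v) i = w i * v ⟨((i : ℕ) + 1) % n, Nat.mod_lt _ i.pos⟩ := by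
  simp only [mulVec, dotProduct, weightedCyclicShift, of_apply, ite_mul, zero_mul]
  rw [Finset.sum_eq_single_of_mem _ (mem_univ ⟨((i : ℕ) + 1) % n, Nat.mod_lt _ i.pos⟩)]
  · rw [if_pos rfl]
  · exact fun j _ hj ↦ if_neg fun h ↦ hj (Fin.ext h)

theorem weightedCyclicShift_mulVec_cyclicShiftEigenvector {w : ℕ → K} (hw : ∀ k < n, w k ≠ 0)
    {μ : K} (hμ : μ ^ n = ∏ k ∈ range n, w k) :
    weightedCyclicShift n w *ᵥ cyclicShiftEigenvector w μ = μ • cyclicShiftEigenvector w μ := by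
  funext ⟨i, hin⟩
  have hprod : ∏ k ∈ range i, w k ≠ 0 :=
    prod_ne_zero_iff.mpr fun k hk ↦ hw k ((mem_range.mp hk).trans hin)
  rw [weightedCyclicShift_mulVec_apply, Pi.smul_apply, smul_eq_mul]
  simp only [cyclicShiftEigenvector]
  obtain hi | rfl : i + 1 < n ∨ i + 1 = n := by omega
  · rw [Nat.mod_eq_of_lt hi, prod_range_succ, pow_succ]
    field_simp [hw i hin]
  · rw [Nat.mod_self, pow_zero, prod_range_zero, div_one, mul_one, ← mul_div_assoc, ← pow_succ',
      hμ, prod_range_succ, mul_div_cancel_left₀ _ hprod]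

def cyclicShiftEigenmatrix (w : ℕ → K) (μ : Fin n → K) : Matrix (Fin n) (Fin n) K :=
  of fun i j ↦ cyclicShiftEigenvector w (μ j) i

theorem weightedCyclicShift_mul_cyclicShiftEigenmatrix {w : ℕ → K} (hw : ∀ k < n, w k ≠ 0)
    {μ : Fin n → K} (hμ : ∀ j, μ j ^ n = ∏ k ∈ range n, w k) :
    weightedCyclicShift n w * cyclicShiftEigenmatrix w μ =
      cyclicShiftEigenmatrix w μ * diagonal μ := by
  ext i j
  rw [mul_diagonal, mul_comm]
  exact congrFun (weightedCyclicShift_mulVec_cyclicShiftEigenvector hw (hμ j)) i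

theorem det_cyclicShiftEigenmatrix_ne_zero {w : ℕ → K} (hw : ∀ k < n, w k ≠ 0)
    {μ : Fin n → K} (hμ : Function.Injective μ) : (cyclicShiftEigenmatrix w μ).det ≠ 0 := by
  have hfactor : cyclicShiftEigenmatrix w μ =
      diagonal (fun i : Fin n ↦ (∏ k ∈ range i, w k)⁻¹) * (vandermonde μ)ᵀ := by
    ext i j
    simp [cyclicShiftEigenmatrix, cyclicShiftEigenvector, diagonal_mul, div_eq_inv_mul]
  rw [hfactor, det_mul, det_transpose, det_diagonal]
  refine mul_ne_zero (prod_ne_zero_iff.mpr fun i _ ↦ inv_ne_zero ?_)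
    (det_vandermonde_ne_zero_iff.mpr hμ)
  exact prod_ne_zero_iff.mpr fun k hk ↦ hw k ((mem_range.mp hk).trans i.isLt)

theorem weightedCyclicShift_eq_mul_diagonal_mul_inv {w : ℕ → K} (hw : ∀ k < n, w k ≠ 0)
    {μ : Fin n → K} (hμ_inj : Function.Injective μ) (hμ : ∀ j, μ j ^ n = ∏ k ∈ range n, w k) :
    ∃ V : Matrix (Fin n) (Fin n) K, IsUnit V ∧ weightedCyclicShift n w = V * diagonal μ * V⁻¹ := by
  have hdet := (det_cyclicShiftEigenmatrix_ne_zero hw hμ_inj).isUnit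
  refine ⟨_, (isUnit_iff_isUnit_det _).mpr hdet, ?_⟩
  rw [← weightedCyclicShift_mul_cyclicShiftEigenmatrix hw hμ, mul_nonsing_inv_cancel_right _ _ hdet]

end WeightedCyclicShift

theorem prod_range_zpow {G : Type*} [CommGroupWithZero G] {z : G} (hz : z ≠ 0) (e : ℕ → ℤ)
    (n : ℕ) : ∏ k ∈ range n, z ^ e k = z ^ ∑ k ∈ range n, e k := by
  induction n with
  | zero => simp
  | succ n ih => rw [prod_range_succ, sum_range_succ, ih, zpow_add₀ hz]

section Higgs

variable (r s : ℕ)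

theorem alphaFloor_zero : alphaFloor r s 0 = 0 := by
  simp [alphaFloor]

theorem natCast_mul_alphaFloor_self : (r : ℤ) * alphaFloor r s r = r * (r - s) := by
  rcases eq_or_ne r 0 with rfl | hr
  · simp
  · rw [alphaFloor, mul_div_cancel_left₀ _ (Nat.cast_ne_zero.mpr hr)]
    exact_mod_cast congrArg ((r : ℤ) * ·) (Int.floor_intCast ((r : ℤ) - s))

theorem higgs_eq_weightedCyclicShift (z : ℂ) :
    higgs r s z = weightedCyclicShift r
      fun k ↦ z ^ ((r : ℤ) * (alphaFloor r s (r - 1 - k) - alphaFloor r s (r - k))) := by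
  ext i j
  simp only [higgs, weightedCyclicShift, of_apply]
  obtain hi | hi : (i : ℕ) + 1 < r ∨ (i : ℕ) + 1 = r := by omega
  · rw [Nat.mod_eq_of_lt hi, if_neg (by omega : ¬((i : ℕ) = r - 1 ∧ _))]
    simp only [eq_comm]
  · rw [hi, Nat.mod_self, if_neg (by omega), show r - 1 - i = 0 by omega,
      show r - (i : ℕ) = 1 by omega, alphaFloor_zero]
    simp only [show (i : ℕ) = r - 1 by omega, true_and, zero_sub, mul_neg, neg_mul]

theorem sum_range_higgs_exponent :
    ∑ k ∈ range r, (r : ℤ) * (alphaFloor r s (r - 1 - k) - alphaFloor r s (r - k)) =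
      r * (s - r) := by
  rw [← mul_sum]
  have hsub : ∀ k, r - 1 - k = r - (k + 1) := by omega
  simp_rw [hsub]
  rw [sum_range_sub (fun k ↦ alphaFloor r s (r - k)), Nat.sub_self, Nat.sub_zero, alphaFloor_zero,
    zero_sub, mul_neg, natCast_mul_alphaFloor_self]
  ring

end Higgs

theorem injective_cexp_pow_mul (r : ℕ) {c : ℂ} (hc : c ≠ 0) :
    Function.Injective fun j : Fin r ↦ Complex.exp (2 * Real.pi * Complex.I / r) ^ (j : ℕ) * c :=
  fun a b hab ↦ Fin.ext <| (Complex.isPrimitiveRoot_exp r a.pos.ne').pow_inj a.isLt b.isLt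
    (mul_right_cancel₀ hc hab)

theorem cexp_pow_mul_pow_self (r : ℕ) (j : Fin r) (c : ℂ) :
    (Complex.exp (2 * Real.pi * Complex.I / r) ^ (j : ℕ) * c) ^ r = c ^ r := by
  rw [mul_pow, ← pow_mul, mul_comm (j : ℕ), pow_mul,
    (Complex.isPrimitiveRoot_exp r j.pos.ne').pow_eq_one, one_pow, one_mul]

theorem stmt8_general (r s : ℕ) (z : ℂ) (hz : z ≠ 0) :
    ∃ V : Matrix (Fin r) (Fin r) ℂ, IsUnit V ∧
      higgs r s z =
        V * Matrix.diagonal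
            (fun j : Fin r =>
              Complex.exp (2 * Real.pi * Complex.I / r) ^ (j : ℕ) *
                z ^ ((s : ℤ) - (r : ℤ))) *
          V⁻¹ := by
  rw [higgs_eq_weightedCyclicShift]
  refine weightedCyclicShift_eq_mul_diagonal_mul_inv (fun k _ ↦ zpow_ne_zero _ hz)
    (injective_cexp_pow_mul r (zpow_ne_zero _ hz)) fun j ↦ ?_
  rw [cexp_pow_mul_pow_self, prod_range_zpow hz, sum_range_higgs_exponent, ← zpow_natCast,
    ← _root_.zpow_mul, mul_comm]

/-- The Higgs matrix is diagonalizable with eigenvalues `θ^j z^{s−r}`, `j = 0, …, r−1`,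
where `θ = exp(2πi/r)`. -/
theorem stmt8 (r s : ℕ) (hr : 2 ≤ r) (hs1 : 1 ≤ s) (hsr : s ≤ r)
    (z : ℂ) (hz : z ≠ 0) :
    ∃ V : Matrix (Fin r) (Fin r) ℂ, IsUnit V ∧
      higgs r s z =
        V * Matrix.diagonal
            (fun j : Fin r =>
              Complex.exp (2 * Real.pi * Complex.I / r) ^ (j : ℕ) *
                z ^ ((s : ℤ) - (r : ℤ))) *
          V⁻¹ :=
  stmt8_general r s z hz
end

section
/- Fix integers r ≥ 2 and s with 1 ≤ s ≤ r, complex numbers S_1, …, S_r, and a nonzero complex number z. Then det( z^{s−r}·Id − F(z) ) = Σ_{j=1}^{r} (−1)^j S_j z^{r(s−r) − s·j}. -/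
open Finset Matrix

/-- The shifted matrix `F(z)` of the `(r,s)` quantum curve:
`F(z)_{1,j} = (−1)^{j−1} S_j z^{r(⌊α_r⌋ − ⌊α_{r+1−j}⌋ − j)}` for `1 ≤ j ≤ r−1`,
`F(z)_{1,r} = (−1)^{r−1} S_r z^{r(⌊α_r⌋ − ⌊α_1⌋ − r)} + z^{−r⌊α_1⌋}`,
`F(z)_{k+1,k} = z^{r(⌊α_{r−k}⌋ − ⌊α_{r+1−k}⌋)}` for `1 ≤ k ≤ r−1`,
all other entries `0` (indices `0`-based in Lean, so `S j` is `S_{j+1}`). -/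
noncomputable def shiftedF (r s : ℕ) (S : Fin r → ℂ) (z : ℂ) : Matrix (Fin r) (Fin r) ℂ :=
  Matrix.of fun i j =>
    (if (i : ℕ) = 0 then
        (-1 : ℂ) ^ (j : ℕ) * S j *
            z ^ ((r : ℤ) * (alphaFloor r s r - alphaFloor r s (r - (j : ℕ)) - ((j : ℕ) + 1)))
          + (if (j : ℕ) = r - 1 then z ^ (-(r : ℤ) * alphaFloor r s 1) else 0)
      else 0)
    + (if (j : ℕ) + 1 = (i : ℕ) then
        z ^ ((r : ℤ) * (alphaFloor r s (r - (i : ℕ)) - alphaFloor r s (r + 1 - (i : ℕ))))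
      else 0)

/-!
`F(z)` is a companion-type matrix: a first row plus a subdiagonal. Expanding
`det (d • 1 - F)` along the first column gives `d ^ r - ∑ⱼ bⱼ (f₁ ⋯ fⱼ) d ^ (r - 1 - j)`,
where `bⱼ` are the first-row entries and `fᵢ` the subdiagonal ones. The subdiagonal
exponents telescope, `f₁ ⋯ fⱼ = z ^ (r (⌊α_{r-j}⌋ - ⌊α_r⌋))`, which turns the `j`-th term
into `(-1) ^ j Sⱼ z ^ (r (s - r) - s (j + 1))`, while the corner term `z ^ (-r ⌊α_1⌋)`
contributes `z ^ (-r ⌊α_r⌋) = z ^ (r (s - r)) = d ^ r` and cancels the leading term.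
-/

namespace Matrix

variable {R : Type*} [CommRing R]

def rowDiagSubdiag (n : ℕ) (c : Fin (n + 1) → R) (d : R) (e : ℕ → R) :
    Matrix (Fin (n + 1)) (Fin (n + 1)) R :=
  of fun i j => if i = 0 then c j else if i = j then d else if (j : ℕ) + 1 = i then e j else 0

lemma det_submatrix_succ_succ_rowDiagSubdiag (n : ℕ) (c : Fin (n + 1) → R) (d : R)
    (e : ℕ → R) : ((rowDiagSubdiag n c d e).submatrix Fin.succ Fin.succ).det = d ^ n := by
  rw [det_of_isLowerTriangular]
  · simp [rowDiagSubdiag]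
  · intro i j hij
    have hij : (i : ℕ) < j := hij
    simp [rowDiagSubdiag, show i ≠ j by omega, show (j : ℕ) + 1 ≠ i by omega]

lemma submatrix_one_succAbove_rowDiagSubdiag (n : ℕ) (c : Fin (n + 2) → R) (d : R)
    (e : ℕ → R) :
    (rowDiagSubdiag (n + 1) c d e).submatrix (Fin.succAbove 1) Fin.succ
      = rowDiagSubdiag n (fun j => c j.succ) d (fun k => e (k + 1)) := by
  ext i j
  cases i using Fin.cases with
  | zero => simp [rowDiagSubdiag]
  | succ i => simp [rowDiagSubdiag, Fin.one_succAbove_succ]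

lemma det_rowDiagSubdiag_succ (n : ℕ) (c : Fin (n + 2) → R) (d : R) (e : ℕ → R) :
    (rowDiagSubdiag (n + 1) c d e).det
      = c 0 * d ^ (n + 1)
        - e 0 * (rowDiagSubdiag n (fun j => c j.succ) d (fun k => e (k + 1))).det := by
  rw [det_succ_column_zero, Fin.sum_univ_succ, Fin.sum_univ_succ, sum_eq_zero]
  · rw [Fin.succAbove_zero, Fin.succ_zero_eq_one, det_submatrix_succ_succ_rowDiagSubdiag,
      submatrix_one_succAbove_rowDiagSubdiag]
    simp [rowDiagSubdiag]
    ring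
  · intro i _
    simp [rowDiagSubdiag]

theorem det_rowDiagSubdiag (n : ℕ) (c : Fin (n + 1) → R) (d : R) (e : ℕ → R) :
    (rowDiagSubdiag n c d e).det
      = ∑ j : Fin (n + 1), (-1) ^ (j : ℕ) * c j * (∏ k ∈ range j, e k) * d ^ (n - j) := by
  induction n generalizing e with
  | zero => simp [rowDiagSubdiag]
  | succ n ih =>
    rw [det_rowDiagSubdiag_succ, ih, Fin.sum_univ_succ (n := n + 1), mul_sum, sub_eq_add_neg,
      ← sum_neg_distrib]
    congr 1
    · simp
    · refine sum_congr rfl fun j _ => ?_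
      rw [Fin.val_succ, prod_range_succ', pow_succ, Nat.add_sub_add_right]
      ring

/-- The subdiagonal is indexed by rows: the entry at `(i + 1, i)` is `f (i + 1)`. -/
def rowSubdiag (n : ℕ) (b : Fin (n + 1) → R) (f : ℕ → R) :
    Matrix (Fin (n + 1)) (Fin (n + 1)) R :=
  of fun i j => (if (i : ℕ) = 0 then b j else 0) + (if (j : ℕ) + 1 = (i : ℕ) then f i else 0)

lemma smul_one_sub_rowSubdiag (n : ℕ) (b : Fin (n + 1) → R) (f : ℕ → R) (d : R) :
    d • 1 - rowSubdiag n b f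
      = rowDiagSubdiag n (fun j => (if j = 0 then d else 0) - b j) d (fun k => -f (k + 1)) := by
  ext i j
  simp only [rowSubdiag, rowDiagSubdiag, sub_apply, smul_apply, one_apply, of_apply, smul_eq_mul,
    Fin.val_eq_zero_iff]
  split_ifs <;> subst_vars <;> simp_all

theorem det_smul_one_sub_rowSubdiag (n : ℕ) (b : Fin (n + 1) → R) (f : ℕ → R) (d : R) :
    (d • 1 - rowSubdiag n b f).det
      = d ^ (n + 1) - ∑ j, b j * (∏ k ∈ range j, f (k + 1)) * d ^ (n - j) := by
  have sign (j : ℕ) : (-1 : R) ^ j * ∏ k ∈ range j, -f (k + 1) = ∏ k ∈ range j, f (k + 1) := by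
    rw [prod_neg, card_range, ← mul_assoc, ← pow_add, Even.neg_one_pow ⟨j, rfl⟩, one_mul]
  rw [smul_one_sub_rowSubdiag, det_rowDiagSubdiag,
    ← Fintype.sum_ite_eq' (0 : Fin (n + 1)) (fun _ => d ^ (n + 1)), ← sum_sub_distrib]
  refine sum_congr rfl fun j _ => ?_
  rw [show ∀ x y w : R, (-1) ^ (j : ℕ) * x * y * w = x * ((-1) ^ (j : ℕ) * y) * w by
    intros; ring, sign]
  split_ifs with hj
  · subst hj
    simp [pow_succ']
    ring
  · ring

end Matrix

lemma prod_range_zpow_sub {K : Type*} [Field K] {z : K} (hz : z ≠ 0) (g : ℕ → ℤ) (j : ℕ) :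
    ∏ k ∈ range j, z ^ (g (k + 1) - g k) = z ^ (g j - g 0) := by
  induction j with
  | zero => simp
  | succ j ih => rw [prod_range_succ, ih, ← zpow_add₀ hz, sub_add_sub_cancel']

lemma alphaFloor_self (r s : ℕ) (hr : r ≠ 0) : alphaFloor r s r = r - s := by
  rw [alphaFloor, mul_div_cancel_left₀ _ (Nat.cast_ne_zero.mpr hr)]
  exact_mod_cast Int.floor_intCast ((r : ℤ) - s)

section ShiftedF

variable {n s : ℕ} {z : ℂ}

noncomputable def shiftedFRow (n s : ℕ) (S : Fin (n + 1) → ℂ) (z : ℂ) (j : Fin (n + 1)) : ℂ :=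
  (-1) ^ (j : ℕ) * S j * z ^ (((n + 1 : ℕ) : ℤ) * (alphaFloor (n + 1) s (n + 1)
      - alphaFloor (n + 1) s (n + 1 - j) - ((j : ℕ) + 1)))
    + if (j : ℕ) = n then z ^ (-((n + 1 : ℕ) : ℤ) * alphaFloor (n + 1) s 1) else 0

noncomputable def shiftedFSubdiag (n s : ℕ) (z : ℂ) (i : ℕ) : ℂ :=
  z ^ (((n + 1 : ℕ) : ℤ) * (alphaFloor (n + 1) s (n + 1 - i) - alphaFloor (n + 1) s (n + 1 + 1 - i)))

lemma shiftedF_eq_rowSubdiag (S : Fin (n + 1) → ℂ) :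
    shiftedF (n + 1) s S z = Matrix.rowSubdiag n (shiftedFRow n s S z) (shiftedFSubdiag n s z) :=
  rfl

lemma prod_range_shiftedFSubdiag (hz : z ≠ 0) (j : ℕ) :
    ∏ k ∈ range j, shiftedFSubdiag n s z (k + 1)
      = z ^ (((n + 1 : ℕ) : ℤ) * (alphaFloor (n + 1) s (n + 1 - j) - alphaFloor (n + 1) s (n + 1))) := by
  convert prod_range_zpow_sub hz (fun k => ((n + 1 : ℕ) : ℤ) * alphaFloor (n + 1) s (n + 1 - k)) j
    using 2 with k
  · simp only [shiftedFSubdiag, Nat.add_sub_add_right, mul_sub]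
  · simp [mul_sub]

lemma shiftedFRow_mul_zpow_mul_pow (hz : z ≠ 0) (S : Fin (n + 1) → ℂ) (j : Fin (n + 1)) :
    shiftedFRow n s S z j
        * z ^ (((n + 1 : ℕ) : ℤ) * (alphaFloor (n + 1) s (n + 1 - j) - alphaFloor (n + 1) s (n + 1)))
        * (z ^ ((s : ℤ) - ((n + 1 : ℕ) : ℤ))) ^ (n - j)
      = (-1) ^ (j : ℕ) * S j * z ^ (((n + 1 : ℕ) : ℤ) * ((s : ℤ) - ((n + 1 : ℕ) : ℤ))
          - s * ((j : ℕ) + 1))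
        + if j = Fin.last n then (z ^ ((s : ℤ) - ((n + 1 : ℕ) : ℤ))) ^ (n + 1) else 0 := by
  have hjn : (j : ℕ) ≤ n := Fin.is_le j
  simp only [shiftedFRow, ← zpow_natCast (z ^ ((s : ℤ) - _)), ← _root_.zpow_mul, add_mul,
    Fin.ext_iff, Fin.val_last]
  set A := alphaFloor (n + 1) s
  set r : ℤ := ((n + 1 : ℕ) : ℤ) with hr
  congr 1
  · rw [mul_assoc _ (z ^ _), mul_assoc, ← zpow_add₀ hz, ← zpow_add₀ hz]
    congr 2
    rw [hr]
    push_cast [Nat.cast_sub hjn]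
    ring
  · split_ifs with hj
    · have hA : A (n + 1) = r - s := alphaFloor_self _ _ n.succ_ne_zero
      rw [hj, Nat.sub_self, Nat.add_sub_cancel_left, ← zpow_add₀ hz, ← zpow_add₀ hz, hA, hr]
      ring_nf
    · simp

end ShiftedF

theorem stmt9_general (r s : ℕ) (hr : 2 ≤ r)
    (S : Fin r → ℂ) (z : ℂ) (hz : z ≠ 0) :
    (z ^ ((s : ℤ) - (r : ℤ)) • (1 : Matrix (Fin r) (Fin r) ℂ) - shiftedF r s S z).det
      = ∑ j : Fin r, (-1 : ℂ) ^ ((j : ℕ) + 1) * S j *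
          z ^ ((r : ℤ) * ((s : ℤ) - (r : ℤ)) - (s : ℤ) * (((j : ℕ) : ℤ) + 1)) := by
  obtain ⟨n, rfl⟩ : ∃ n, r = n + 1 := ⟨r - 1, by omega⟩
  simp only [shiftedF_eq_rowSubdiag, Matrix.det_smul_one_sub_rowSubdiag,
    prod_range_shiftedFSubdiag hz, shiftedFRow_mul_zpow_mul_pow hz, sum_add_distrib,
    Fintype.sum_ite_eq', sub_add_cancel_right, ← sum_neg_distrib]
  refine sum_congr rfl fun j _ => ?_
  ring

/-- `det(z^{s−r}·Id − F(z)) = Σ_{j=1}^r (−1)^j S_j z^{r(s−r) − s·j}`. -/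
theorem stmt9 (r s : ℕ) (hr : 2 ≤ r) (hs1 : 1 ≤ s) (hsr : s ≤ r)
    (S : Fin r → ℂ) (z : ℂ) (hz : z ≠ 0) :
    (z ^ ((s : ℤ) - (r : ℤ)) • (1 : Matrix (Fin r) (Fin r) ℂ) - shiftedF r s S z).det
      = ∑ j : Fin r, (-1 : ℂ) ^ ((j : ℕ) + 1) * S j *
          z ^ ((r : ℤ) * ((s : ℤ) - (r : ℤ)) - (s : ℤ) * (((j : ℕ) : ℤ) + 1)) :=
  stmt9_general r s hr S z hz
end

section
/- Let r and s be coprime positive integers and set a_k = r·⌊k(r−s)/r⌋ − k(r−s) ∈ ℤ for k = 1, …, r. Then for all nonzero complex numbers z_1 and z_2: ( Σ_{k=1}^{r} (z_2/z_1)^{a_k} ) · ( Σ_{k=1}^{r} (z_1/z_2)^{a_k} ) · z_1^{r−1} · z_2^{r−1} · (z_1 − z_2)^2 = (z_1^r − z_2^r)^2. -/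
open Finset

/-!
Writing `a_k = -(k (r - s) mod r)`, the exponents are the negated residues of the multiples of
`r - s`, a unit modulo `r`; so as `k` runs over `1, …, r` they run over `0, -1, …, -(r - 1)`
exactly once. Each factor is thus a geometric sum `∑_{j<r} (z₁/z₂)^j`, and
`(∑_{j<r} (z₁/z₂)^j) z₂^(r-1) (z₁ - z₂) = z₁^r - z₂^r`.
-/

theorem Int.natCast_mul_floor_div_sub_self {K : Type*} [Field K] [LinearOrder K]
    [IsStrictOrderedRing K] [FloorRing K] (n : ℤ) (r : ℕ) :
    (r : ℤ) * ⌊(n : K) / r⌋ - n = -(n % r) := by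
  rw [Int.floor_div_natCast, Int.floor_intCast, Int.emod_def]
  ring

theorem Int.injOn_emod_mul_Icc {r : ℕ} {m : ℤ} (hm : IsCoprime (r : ℤ) m) :
    Set.InjOn (fun k : ℕ => (k : ℤ) * m % r) (Icc 1 r) := by
  intro k₁ hk₁ k₂ hk₂ h
  simp only [coe_Icc, Set.mem_Icc] at hk₁ hk₂
  have hdvd : (r : ℤ) ∣ ((k₁ : ℤ) - k₂) * m := by
    rw [sub_mul]; exact Int.ModEq.dvd h.symm
  have := Int.eq_zero_of_abs_lt_dvd (hm.dvd_of_dvd_mul_right hdvd) (by rw [abs_lt]; omega)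
  omega

theorem Finset.sum_Icc_emod_mul {M : Type*} [AddCommMonoid M] {r : ℕ} {m : ℤ}
    (hm : IsCoprime (r : ℤ) m) (f : ℤ → M) :
    ∑ k ∈ Icc 1 r, f ((k : ℤ) * m % r) = ∑ j ∈ range r, f j := by
  set e : ℕ → ℕ := fun k => ((k : ℤ) * m % r).toNat
  have he : ∀ k ∈ Icc 1 r, (e k : ℤ) = (k : ℤ) * m % r := fun k hk =>
    Int.toNat_of_nonneg (Int.emod_nonneg _ (by simp at hk; omega))
  have hmaps : Set.MapsTo e (Icc 1 r) (range r) := by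
    intro k hk
    have := Int.emod_lt_of_pos ((k : ℤ) * m) (by simp at hk; omega : (0 : ℤ) < r)
    have := he k hk
    simp only [coe_range, Set.mem_Iio]
    omega
  have hinj : Set.InjOn e (Icc 1 r) := fun k₁ hk₁ k₂ hk₂ h =>
    Int.injOn_emod_mul_Icc hm hk₁ hk₂ (by simp only [← he k₁ hk₁, ← he k₂ hk₂, h])
  refine sum_nbij e hmaps hinj
    (surjOn_of_injOn_of_card_le e hmaps hinj (by simp)) fun k hk => ?_
  rw [he k hk]

theorem sum_Icc_zpow_neg_emod_mul {K : Type*} [DivisionRing K] {r : ℕ} {m : ℤ}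
    (hm : IsCoprime (r : ℤ) m) (w : K) :
    ∑ k ∈ Icc 1 r, w ^ (-((k : ℤ) * m % r)) = ∑ j ∈ range r, w⁻¹ ^ j := by
  rw [sum_Icc_emod_mul hm fun j => w ^ (-j)]
  simp only [zpow_neg, zpow_natCast, inv_pow]

theorem geom_sum_div_mul_pow_mul_sub {K : Type*} [Field K] (x : K) {y : K} (hy : y ≠ 0)
    (n : ℕ) : (∑ i ∈ range n, (x / y) ^ i) * y ^ (n - 1) * (x - y) = x ^ n - y ^ n := by
  rw [← geom_sum₂_mul, sum_mul]
  congr 1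
  refine sum_congr rfl fun i hi => ?_
  have hsplit : y ^ (n - 1) = y ^ i * y ^ (n - 1 - i) := by
    rw [← pow_add, Nat.add_sub_cancel' (Nat.le_sub_one_of_lt (mem_range.1 hi))]
  rw [hsplit, div_pow]
  field_simp

theorem stmt10_general (r s : ℕ) (hcop : Nat.Coprime r s)
    (a : ℕ → ℤ)
    (ha : ∀ k, a k =
      (r : ℤ) * ⌊((k : ℚ) * ((r : ℚ) - (s : ℚ))) / (r : ℚ)⌋ - (k : ℤ) * ((r : ℤ) - (s : ℤ)))
    (z1 z2 : ℂ) (h1 : z1 ≠ 0) (h2 : z2 ≠ 0) :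
    (∑ k ∈ Finset.Icc 1 r, (z2 / z1) ^ a k) * (∑ k ∈ Finset.Icc 1 r, (z1 / z2) ^ a k)
        * z1 ^ (r - 1) * z2 ^ (r - 1) * (z1 - z2) ^ 2
      = (z1 ^ r - z2 ^ r) ^ 2 := by
  have ha' : ∀ k : ℕ, a k = -((k : ℤ) * (r - s) % r) := fun k => by
    rw [ha, ← Int.natCast_mul_floor_div_sub_self (K := ℚ)]
    push_cast
    rfl
  have hm : IsCoprime (r : ℤ) (r - s) := by
    simpa [neg_add_eq_sub] using (Nat.isCoprime_iff_coprime.2 hcop).neg_right.add_mul_left_right 1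
  simp only [ha', sum_Icc_zpow_neg_emod_mul hm, inv_div]
  linear_combination
    (-((∑ j ∈ range r, (z2 / z1) ^ j) * z1 ^ (r - 1) * (z2 - z1))) *
        geom_sum_div_mul_pow_mul_sub z1 h2 r +
      (-(z1 ^ r - z2 ^ r)) * geom_sum_div_mul_pow_mul_sub z2 h1 r

/-- With `a_k = r⌊k(r−s)/r⌋ − k(r−s)` for coprime positive `r, s`, one has, for all
nonzero `z₁, z₂ ∈ ℂ`:
`(Σ_{k=1}^r (z₂/z₁)^{a_k})(Σ_{k=1}^r (z₁/z₂)^{a_k}) z₁^{r−1} z₂^{r−1} (z₁−z₂)² = (z₁^r − z₂^r)²`. -/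
theorem stmt10 (r s : ℕ) (hr : 1 ≤ r) (hs : 1 ≤ s) (hcop : Nat.Coprime r s)
    (a : ℕ → ℤ)
    (ha : ∀ k, a k =
      (r : ℤ) * ⌊((k : ℚ) * ((r : ℚ) - (s : ℚ))) / (r : ℚ)⌋ - (k : ℤ) * ((r : ℤ) - (s : ℤ)))
    (z1 z2 : ℂ) (h1 : z1 ≠ 0) (h2 : z2 ≠ 0) :
    (∑ k ∈ Finset.Icc 1 r, (z2 / z1) ^ a k) * (∑ k ∈ Finset.Icc 1 r, (z1 / z2) ^ a k)
        * z1 ^ (r - 1) * z2 ^ (r - 1) * (z1 - z2) ^ 2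
      = (z1 ^ r - z2 ^ r) ^ 2 :=
  stmt10_general r s hcop a ha z1 z2 h1 h2
end

section
/- Let r ≥ 2 and 1 ≤ s ≤ r be integers with gcd(r, s) = 1. Then for every k ∈ {1, …, r}: ⌊(r−k)(r−s)/r⌋ = ⌊(r+1−k)(r−s)/r⌋ if and only if there exists l ∈ {1, …, s} with k = ⌈l·r/s⌉. -/
/-!
One has `α_{r-k} = (r - s - k) + ks/r`, so `⌊α_{r-k}⌋` and `⌊α_{r+1-k}⌋`
agree exactly when `⌊ks/r⌋ = ⌊(k-1)s/r⌋ + 1`. Since the step `s/r` is at most `1`, this says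
that the half-open interval `((k-1)s/r, ks/r]` contains an integer `l`, i.e. `k - 1 < lr/s ≤ k`,
i.e. `k = ⌈lr/s⌉`.
-/

theorem floor_add_eq_floor_add_one_iff {K : Type*} [Ring K] [LinearOrder K] [IsOrderedRing K]
    [FloorRing K] {x δ : K} (hδ : δ ≤ 1) :
    ⌊x + δ⌋ = ⌊x⌋ + 1 ↔ ∃ l : ℤ, x < l ∧ (l : K) ≤ x + δ := by
  have hle : ⌊x + δ⌋ ≤ ⌊x⌋ + 1 := by
    rw [← Int.floor_add_one]
    exact Int.floor_le_floor (add_le_add_right hδ x)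
  constructor
  · intro h
    refine ⟨⌊x⌋ + 1, by exact_mod_cast Int.lt_floor_add_one x, ?_⟩
    rw [← h]
    exact Int.floor_le _
  · rintro ⟨l, hxl, hlx⟩
    have hl : ⌊x⌋ < l := Int.floor_lt.mpr hxl
    have : l ≤ ⌊x + δ⌋ := Int.le_floor.mpr hlx
    omega

theorem ceil_mul_div_eq_iff {K : Type*} [Field K] [LinearOrder K] [IsStrictOrderedRing K]
    [FloorRing K] {r s : K} (hr : 0 < r) (hs : 0 < s) (l : K) (k : ℤ) :
    ⌈l * r / s⌉ = k ↔ ((k : K) - 1) * s / r < l ∧ l ≤ k * s / r := by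
  rw [Int.ceil_eq_iff, lt_div_iff₀ hs, div_le_iff₀ hs, div_lt_iff₀ hr, le_div_iff₀ hr]

theorem alphaFloor_sub {r k : ℕ} (s : ℕ) (hr : 0 < r) (hkr : k ≤ r) :
    alphaFloor r s (r - k) = (r : ℤ) - s - k + ⌊(k : ℚ) * s / r⌋ := by
  have hr' : (r : ℚ) ≠ 0 := by positivity
  have hα : ((r - k : ℕ) : ℚ) * (r - s) / r = (((r : ℤ) - s - k : ℤ) : ℚ) + k * s / r := by
    push_cast [Nat.cast_sub hkr]
    field_simp
    ring
  rw [alphaFloor, hα, Int.floor_intCast_add]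

theorem exists_int_mem_Ioc_iff_exists_ceil_eq {r s k : ℕ} (hs : 0 < s) (hsr : s ≤ r)
    (hk1 : 1 ≤ k) (hkr : k ≤ r) :
    (∃ l : ℤ, ((k : ℚ) - 1) * s / r < l ∧ (l : ℚ) ≤ k * s / r) ↔
      ∃ l : ℕ, 1 ≤ l ∧ l ≤ s ∧ (k : ℤ) = ⌈(l : ℚ) * r / s⌉ := by
  have hr' : (0 : ℚ) < r := by exact_mod_cast hs.trans_le hsr
  have hs' : (0 : ℚ) < s := by exact_mod_cast hs
  have hk : (1 : ℚ) ≤ k := by exact_mod_cast hk1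
  have hceil (l : ℕ) := ceil_mul_div_eq_iff hr' hs' (l : ℚ) k
  simp only [Int.cast_natCast] at hceil
  constructor
  · rintro ⟨l, hlo, hhi⟩
    have hl0 : (0 : ℚ) < l := lt_of_le_of_lt (by positivity) hlo
    lift l to ℕ using by exact_mod_cast hl0.le
    simp only [Int.cast_natCast] at hlo hhi hl0
    have hlr : (l : ℚ) * r ≤ s * r := by
      rw [le_div_iff₀ hr'] at hhi
      nlinarith [(Nat.cast_le (α := ℚ)).mpr hkr]
    exact ⟨l, by exact_mod_cast hl0, by exact_mod_cast le_of_mul_le_mul_right hlr hr',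
      ((hceil l).mpr ⟨hlo, hhi⟩).symm⟩
  · rintro ⟨l, -, -, hl⟩
    exact ⟨l, by simpa only [Int.cast_natCast] using (hceil l).mp hl.symm⟩

theorem stmt13_general (r s : ℕ) (hs1 : 1 ≤ s) (hsr : s ≤ r)
    (k : ℕ) (hk1 : 1 ≤ k) (hkr : k ≤ r) :
    alphaFloor r s (r - k) = alphaFloor r s (r + 1 - k) ↔
      ∃ l : ℕ, 1 ≤ l ∧ l ≤ s ∧ (k : ℤ) = ⌈((l : ℚ) * (r : ℚ)) / (s : ℚ)⌉ := by
  have hr : 0 < r := by omega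
  have hr' : (0 : ℚ) < r := by exact_mod_cast hr
  set x : ℚ := ((k : ℚ) - 1) * s / r
  have hks : (k : ℚ) * s / r = x + s / r := by simp only [x]; ring
  have hstep : (s : ℚ) / r ≤ 1 := (div_le_one hr').mpr (by exact_mod_cast hsr)
  rw [show r + 1 - k = r - (k - 1) by omega, alphaFloor_sub s hr hkr,
    alphaFloor_sub s hr (by omega : k - 1 ≤ r), Nat.cast_sub hk1, Nat.cast_sub hk1]
  push_cast
  rw [hks]
  calc _ ↔ ⌊x + s / r⌋ = ⌊x⌋ + 1 := by constructor <;> intro h <;> linarith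
    _ ↔ ∃ l : ℤ, x < l ∧ (l : ℚ) ≤ x + s / r := floor_add_eq_floor_add_one_iff hstep
    _ ↔ _ := by
      rw [← hks]
      exact exists_int_mem_Ioc_iff_exists_ceil_eq hs1 hsr hk1 hkr

/-- For coprime `r, s` with `r ≥ 2`, `1 ≤ s ≤ r`, and `1 ≤ k ≤ r`:
`⌊(r−k)(r−s)/r⌋ = ⌊(r+1−k)(r−s)/r⌋` if and only if `k = ⌈l·r/s⌉` for some `l ∈ {1, …, s}`. -/
theorem stmt13 (r s : ℕ) (hr : 2 ≤ r) (hs1 : 1 ≤ s) (hsr : s ≤ r)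
    (hcop : Nat.Coprime r s) (k : ℕ) (hk1 : 1 ≤ k) (hkr : k ≤ r) :
    alphaFloor r s (r - k) = alphaFloor r s (r + 1 - k) ↔
      ∃ l : ℕ, 1 ≤ l ∧ l ≤ s ∧ (k : ℤ) = ⌈((l : ℚ) * (r : ℚ)) / (s : ℚ)⌉ :=
  stmt13_general r s hs1 hsr k hk1 hkr
end

section
/- Let r ≥ 2 and s ≥ 1 be coprime integers, let θ = exp(2πi/r), let z be a nonzero complex number, let S_1, …, S_r be complex numbers, and let i ∈ {1, …, r}. Then Σ_{m=0}^{r−1} ( Σ_{k=1}^{r} (−1)^{k−1} S_k · θ^{−m·s·(k−1)} · z^{−s(k−1)−1} ) · e_{i−1}( { r·θ^{m'·s}·z^{s−1} : 0 ≤ m' ≤ r−1, m' ≠ m } ) = S_i · r^i · z^{−i}, where e_{i−1} denotes the (i−1)-st elementary symmetric polynomial of the indicated multiset of r−1 complex numbers (with e_0 = 1). -/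
/-!
Put `w = θ ^ s`, a primitive `r`-th root of unity because `gcd (r, s) = 1`; the sheet values are
`c w ^ m'` with `c = r z ^ (s - 1)`. The `w ^ m'` are the roots of `X ^ r - 1`, whose middle
coefficients vanish, so deleting the root `w ^ m` leaves elementary symmetric functions
`e_j = (-w ^ m) ^ j`. The sum over the sheets `m` is then a discrete Fourier inversion in which
only the term `k = i - 1` survives, and `r · (-1) ^ (i-1) S_i z ^ (-s(i-1)-1) · (-c) ^ (i-1)`
simplifies to `S_i r ^ i z ^ (-i)`.
-/
open Finset

/-- The `j`-th elementary symmetric polynomial of the family `f` restricted to the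
finite index set `s` of sheets: the sum over all `j`-element subsets of `s` of the
products of the corresponding values (so `e_0 = 1`). -/
noncomputable def esymFin {n : ℕ} (s : Finset (Fin n)) (f : Fin n → ℂ) (j : ℕ) : ℂ :=
  ∑ t ∈ s.powersetCard j, ∏ a ∈ t, f a

open Polynomial

namespace Multiset

variable {R : Type*} [CommRing R]

theorem esymm_cons_succ (a : R) (s : Multiset R) (j : ℕ) :
    (a ::ₘ s).esymm (j + 1) = s.esymm (j + 1) + a * s.esymm j := by
  simp [esymm, powersetCard_cons, sum_map_mul_left]

theorem esymm_eq_neg_pow_of_esymm_cons_eq_zero {a : R} {s : Multiset R}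
    (h : ∀ k, 0 < k → k ≤ card s → (a ::ₘ s).esymm k = 0) {j : ℕ} (hj : j ≤ card s) :
    s.esymm j = (-a) ^ j := by
  induction j with
  | zero => simp [esymm]
  | succ j ih =>
    have hcons := esymm_cons_succ a s j
    rw [h (j + 1) j.succ_pos hj, ih (by omega)] at hcons
    linear_combination -hcons

end Multiset

namespace IsPrimitiveRoot

section Domain

variable {R : Type*} [CommRing R] [IsDomain R] {ζ : R} {n : ℕ}

theorem esymm_nthRoots_one_eq_zero (hζ : IsPrimitiveRoot ζ n) {k : ℕ} (hk0 : 0 < k)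
    (hkn : k < n) : (nthRoots n (1 : R)).esymm k = 0 := by
  have hvieta := coeff_eq_esymm_roots_of_card (p := X ^ n - C (1 : R)) (k := n - k)
    (by rw [natDegree_X_pow_sub_C]; exact hζ.card_nthRoots_one)
    (by rw [natDegree_X_pow_sub_C]; omega)
  rw [natDegree_X_pow_sub_C, leadingCoeff_X_pow_sub_C (by omega), Nat.sub_sub_self hkn.le]
    at hvieta
  have hcoeff : (X ^ n - C (1 : R)).coeff (n - k) = 0 := by
    rw [coeff_sub, coeff_X_pow, coeff_C, if_neg (by omega), if_neg (by omega), sub_zero]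
  rw [hcoeff] at hvieta
  simpa [nthRoots] using hvieta.symm

theorem esymm_nthRoots_one_erase [DecidableEq R] (hζ : IsPrimitiveRoot ζ n) {η : R}
    (hη : η ∈ nthRoots n (1 : R)) {j : ℕ} (hj : j < n) :
    ((nthRoots n (1 : R)).erase η).esymm j = (-η) ^ j := by
  have hcons := Multiset.cons_erase hη
  have hcard : Multiset.card ((nthRoots n (1 : R)).erase η) + 1 = n := by
    rw [← Multiset.card_cons, hcons, hζ.card_nthRoots_one]
  refine Multiset.esymm_eq_neg_pow_of_esymm_cons_eq_zero (fun k hk0 hk => ?_) (by omega)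
  rw [hcons]
  exact hζ.esymm_nthRoots_one_eq_zero hk0 (by omega)

theorem nthRoots_one_eq_map_fin_pow (hζ : IsPrimitiveRoot ζ n) :
    nthRoots n (1 : R) = univ.val.map (fun a : Fin n => ζ ^ (a : ℕ)) := by
  rw [hζ.nthRoots_eq (one_pow n), Fin.univ_val_map, List.ofFn_eq_map, Multiset.range,
    ← List.map_coe_finRange_eq_range, Multiset.map_coe, List.map_map]
  simp [Function.comp_def]

end Domain

section Field

variable {K : Type*} [Field K] {w : K} {n : ℕ}

theorem sum_pow_mul_inv_pow (hw : IsPrimitiveRoot w n) {j k : ℕ} (hj : j < n) (hk : k < n) :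
    ∑ m ∈ range n, w ^ (m * j) * (w ^ (m * k))⁻¹ = if j = k then (n : K) else 0 := by
  have hw0 : w ≠ 0 := hw.ne_zero (by omega)
  set x := w ^ j * (w ^ k)⁻¹
  have hterm : ∀ m : ℕ, w ^ (m * j) * (w ^ (m * k))⁻¹ = x ^ m := fun m => by
    rw [mul_pow, inv_pow, ← pow_mul, ← pow_mul, mul_comm j, mul_comm k]
  simp only [hterm]
  split_ifs with hjk
  · simp [x, hjk, hw0]
  · have hx1 : x ≠ 1 := fun h =>
      hjk (hw.pow_inj hj hk ((mul_inv_eq_one₀ (pow_ne_zero _ hw0)).mp h))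
    have hxn : x ^ n = 1 := by
      rw [mul_pow, inv_pow, ← pow_mul, ← pow_mul, mul_comm j, mul_comm k, pow_mul, pow_mul,
        hw.pow_eq_one, one_pow, one_pow, inv_one, mul_one]
    rw [geom_sum_eq hx1, hxn, sub_self, zero_div]

theorem sum_sum_mul_inv_pow_mul_pow (hw : IsPrimitiveRoot w n) (a : Fin n → K) (j : Fin n) :
    ∑ m : Fin n, (∑ k : Fin n, a k * (w ^ ((m : ℕ) * k))⁻¹) * w ^ ((m : ℕ) * j) =
      n * a j := by
  calc ∑ m : Fin n, (∑ k : Fin n, a k * (w ^ ((m : ℕ) * k))⁻¹) * w ^ ((m : ℕ) * j)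
      = ∑ k : Fin n, a k * ∑ m ∈ range n, w ^ (m * j) * (w ^ (m * k))⁻¹ := by
        simp_rw [sum_mul]
        rw [sum_comm]
        refine sum_congr rfl fun k _ => ?_
        rw [← Fin.sum_univ_eq_sum_range (fun m => w ^ (m * j.val) * (w ^ (m * k.val))⁻¹),
          mul_sum]
        exact sum_congr rfl fun m _ => by ring
    _ = n * a j := by
        simp_rw [hw.sum_pow_mul_inv_pow j.isLt (Fin.isLt _), Fin.val_inj]
        simp [mul_comm]

end Field

end IsPrimitiveRoot

theorem esymFin_eq_esymm {n : ℕ} (s : Finset (Fin n)) (f : Fin n → ℂ) (j : ℕ) :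
    esymFin s f j = (s.val.map f).esymm j :=
  (Finset.esymm_map_val f s j).symm

theorem esymFin_compl_singleton_mul_pow {r : ℕ} {w : ℂ} (hw : IsPrimitiveRoot w r) (c : ℂ)
    (m : Fin r) {j : ℕ} (hj : j < r) :
    esymFin (univ \ {m}) (fun a => c * w ^ (a : ℕ)) j = (-(c * w ^ (m : ℕ))) ^ j := by
  have hroots : (univ \ {m}).val.map (fun a : Fin r => w ^ (a : ℕ))
      = (nthRoots r (1 : ℂ)).erase (w ^ (m : ℕ)) := by
    rw [hw.nthRoots_one_eq_map_fin_pow, ← insert_erase (mem_univ m),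
      insert_val_of_notMem (notMem_erase m _), Multiset.map_cons, Multiset.erase_cons_head,
      sdiff_singleton_eq_erase, erase_insert (notMem_erase m _)]
  have hmem : w ^ (m : ℕ) ∈ nthRoots r (1 : ℂ) := by
    rw [mem_nthRoots (by omega), ← pow_mul, mul_comm, pow_mul, hw.pow_eq_one, one_pow]
  calc esymFin (univ \ {m}) (fun a => c * w ^ (a : ℕ)) j
      = (((univ \ {m}).val.map fun a : Fin r => w ^ (a : ℕ)).map (c • ·)).esymm j := by
        rw [esymFin_eq_esymm, Multiset.map_map]; rfl
    _ = c ^ j * ((nthRoots r (1 : ℂ)).erase (w ^ (m : ℕ))).esymm j := by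
        rw [← Multiset.pow_smul_esymm, hroots, smul_eq_mul]
    _ = (-(c * w ^ (m : ℕ))) ^ j := by
        rw [hw.esymm_nthRoots_one_erase hmem hj, ← mul_pow, mul_neg]

theorem sum_mul_esymFin_compl_singleton {r s : ℕ} {θ : ℂ} (hw : IsPrimitiveRoot (θ ^ s) r)
    (S : Fin r → ℂ) (z : ℂ) (m : Fin r) {j : ℕ} (hj : j < r) :
    (∑ k : Fin r, (-1 : ℂ) ^ (k : ℕ) * S k *
        θ ^ (-((((m : ℕ) * s * (k : ℕ)) : ℕ) : ℤ)) *
        z ^ (-(s : ℤ) * ((k : ℕ) : ℤ) - 1)) *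
      esymFin (univ \ {m}) (fun m' : Fin r => (r : ℂ) * θ ^ ((m' : ℕ) * s) * z ^ (s - 1)) j
    = (-(r * z ^ (s - 1))) ^ j *
      ((∑ k : Fin r, (-1 : ℂ) ^ (k : ℕ) * S k * z ^ (-(s : ℤ) * ((k : ℕ) : ℤ) - 1) *
          ((θ ^ s) ^ ((m : ℕ) * k))⁻¹) * (θ ^ s) ^ ((m : ℕ) * j)) := by
  have hvalues : (fun m' : Fin r => (r : ℂ) * θ ^ ((m' : ℕ) * s) * z ^ (s - 1))
      = fun m' : Fin r => (r * z ^ (s - 1)) * (θ ^ s) ^ (m' : ℕ) := by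
    funext m'
    rw [← pow_mul, mul_comm s]
    ring
  have hθpow : ∀ k : Fin r,
      θ ^ (-((((m : ℕ) * s * (k : ℕ)) : ℕ) : ℤ)) = ((θ ^ s) ^ ((m : ℕ) * k))⁻¹ := by
    intro k
    rw [zpow_neg, zpow_natCast, ← pow_mul]
    ring_nf
  rw [hvalues, esymFin_compl_singleton_mul_pow hw _ m hj, sum_mul, sum_mul, mul_sum]
  refine sum_congr rfl fun k _ => ?_
  rw [hθpow]
  ring

/-- Indices of `S` are `0`-based: `S k` is `S_{k+1}`. -/
theorem stmt15 (r s : ℕ) (hs : 1 ≤ s) (hcop : Nat.Coprime r s)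
    (z : ℂ) (hz : z ≠ 0) (S : Fin r → ℂ)
    (i : ℕ) (hi1 : 1 ≤ i) (hir : i ≤ r) :
    ∑ m : Fin r,
        (∑ k : Fin r, (-1 : ℂ) ^ (k : ℕ) * S k *
            Complex.exp (2 * Real.pi * Complex.I / r) ^
              (-((((m : ℕ) * s * (k : ℕ)) : ℕ) : ℤ)) *
            z ^ (-(s : ℤ) * ((k : ℕ) : ℤ) - 1)) *
          esymFin (Finset.univ \ {m})
            (fun m' : Fin r =>
              (r : ℂ) * Complex.exp (2 * Real.pi * Complex.I / r) ^ ((m' : ℕ) * s) *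
                z ^ (s - 1))
            (i - 1)
      = S ⟨i - 1, by omega⟩ * (r : ℂ) ^ i * z ^ (-(i : ℤ)) := by
  have hw : IsPrimitiveRoot (Complex.exp (2 * Real.pi * Complex.I / r) ^ s) r :=
    (Complex.isPrimitiveRoot_exp r (by omega)).pow_of_coprime s hcop.symm
  rw [sum_congr rfl fun m _ => sum_mul_esymFin_compl_singleton hw S z m (by omega), ← mul_sum,
    hw.sum_sum_mul_inv_pow_mul_pow (fun k => (-1 : ℂ) ^ (k : ℕ) * S k *
      z ^ (-(s : ℤ) * ((k : ℕ) : ℤ) - 1)) ⟨i - 1, by omega⟩]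
  obtain ⟨j, rfl⟩ : ∃ j, i = j + 1 := ⟨i - 1, by omega⟩
  have hzpow :
      z ^ ((s - 1) * j) * z ^ (-(s : ℤ) * (j : ℤ) - 1) = z ^ (-((j + 1 : ℕ) : ℤ)) := by
    rw [← zpow_natCast, ← zpow_add₀ hz]
    push_cast [Nat.cast_sub hs]
    ring_nf
  have hsign : ((-1 : ℂ) ^ j) ^ 2 = 1 := by rw [← pow_mul, pow_mul', neg_one_sq, one_pow]
  simp only [Nat.add_sub_cancel]
  calc (-(r * z ^ (s - 1))) ^ j *
        (r * ((-1 : ℂ) ^ j * S ⟨j, _⟩ * z ^ (-(s : ℤ) * (j : ℤ) - 1)))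
      = ((-1 : ℂ) ^ j) ^ 2 * S ⟨j, by omega⟩ * (r : ℂ) ^ (j + 1) *
          (z ^ ((s - 1) * j) * z ^ (-(s : ℤ) * (j : ℤ) - 1)) := by ring
    _ = S ⟨j, by omega⟩ * (r : ℂ) ^ (j + 1) * z ^ (-((j + 1 : ℕ) : ℤ)) := by
        rw [hsign, hzpow, one_mul]
end

section
/- Fix integers r ≥ 2 and s with 1 ≤ s ≤ r, let z be a nonzero complex number, let θ = exp(2πi/r), and define V(z)_{k,j} = z^{−r⌊α_{r+1−k}⌋} · (θ^{j} z^{s−r})^{k} for k ∈ {1, …, r} and j ∈ {0, 1, …, r−1}. Then for all k and j: V(θz)_{k,j} = V(z)_{k, (j+s) mod r}. Equivalently, V(θz) = V(z)·τ where τ is the permutation matrix whose (a, j) entry is 1 exactly when a = (j+s) mod r, i.e. τ is the s-th power of the cyclic shift permutation matrix. -/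
open Finset Matrix

/-- The eigenvector matrix `V(z)_{k,j} = z^{−r⌊α_{r+1−k}⌋} (θ^j z^{s−r})^k`
for `k ∈ {1, …, r}` (row index `0`-based in Lean, so row `i` is `k = i + 1`)
and `j ∈ {0, …, r−1}`, where `θ = exp(2πi/r)`. -/
noncomputable def eigV (r s : ℕ) (z : ℂ) : Matrix (Fin r) (Fin r) ℂ :=
  Matrix.of fun i j =>
    z ^ (-(r : ℤ) * alphaFloor r s (r - (i : ℕ))) *
      (Complex.exp (2 * Real.pi * Complex.I / r) ^ (j : ℕ) * z ^ ((s : ℤ) - (r : ℤ))) ^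
        ((i : ℕ) + 1)

private lemma zpow_congr_mod' {t : ℂ} (ht : t ≠ 0) {r : ℕ} (htr : t ^ (r : ℤ) = 1)
    {a b : ℤ} (h : (r : ℤ) ∣ b - a) : t ^ a = t ^ b := by
  obtain ⟨q, hq⟩ := h
  have hb : b = a + (r : ℤ) * q := by linarith
  rw [hb, zpow_add₀ ht, _root_.zpow_mul, htr, _root_.one_zpow, mul_one]

/-- Monodromy of the eigenvector matrix under the deck transformation `z ↦ θz`:
`V(θz)_{k,j} = V(z)_{k, (j+s) mod r}`; equivalently `V(θz) = V(z)·τ`, where `τ` is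
the permutation matrix with `τ_{a,j} = 1` exactly when `a = (j+s) mod r`. -/
theorem stmt18 (r s : ℕ) (hr : 2 ≤ r) (hs1 : 1 ≤ s) (hsr : s ≤ r)
    (z : ℂ) (hz : z ≠ 0) :
    (∀ k j : Fin r,
        eigV r s (Complex.exp (2 * Real.pi * Complex.I / r) * z) k j
          = eigV r s z k ⟨((j : ℕ) + s) % r, Nat.mod_lt _ (by omega)⟩)
      ∧ eigV r s (Complex.exp (2 * Real.pi * Complex.I / r) * z)
          = eigV r s z *
              Matrix.of (fun a j : Fin r =>
                if (a : ℕ) = ((j : ℕ) + s) % r then (1 : ℂ) else 0) := by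
  set θ := Complex.exp (2 * Real.pi * Complex.I / r) with hθdef
  have hrC : (r : ℂ) ≠ 0 := Nat.cast_ne_zero.mpr (by omega)
  have hθ0 : θ ≠ 0 := Complex.exp_ne_zero _
  have hθr : θ ^ (r : ℤ) = 1 := by
    rw [hθdef, ← Complex.exp_int_mul]
    push_cast
    rw [show (r : ℂ) * (2 * Real.pi * Complex.I / r) = 2 * Real.pi * Complex.I from by
      field_simp]
    exact Complex.exp_two_pi_mul_I
  have hmain : ∀ k j : Fin r,
      eigV r s (θ * z) k j
        = eigV r s z k ⟨((j : ℕ) + s) % r, Nat.mod_lt _ (by omega)⟩ := by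
    intro i j
    simp only [eigV, Matrix.of_apply]
    have h1 : (θ * z) ^ (-(r : ℤ) * alphaFloor r s (r - (i : ℕ)))
        = z ^ (-(r : ℤ) * alphaFloor r s (r - (i : ℕ))) := by
      rw [mul_zpow, show -(r : ℤ) * alphaFloor r s (r - (i : ℕ))
          = (r : ℤ) * (-(alphaFloor r s (r - (i : ℕ)))) from by ring,
        _root_.zpow_mul, hθr, _root_.one_zpow, one_mul]
    have h2 : θ ^ (j : ℕ) * (θ * z) ^ ((s : ℤ) - (r : ℤ))
        = θ ^ ((((j : ℕ) + s) % r : ℕ)) * z ^ ((s : ℤ) - (r : ℤ)) := by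
      rw [mul_zpow, ← mul_assoc]
      congr 1
      rw [← zpow_natCast θ (j : ℕ), ← zpow_natCast θ ((((j : ℕ) + s) % r : ℕ)),
        ← zpow_add₀ hθ0]
      refine zpow_congr_mod' hθ0 hθr ?_
      push_cast
      have h := Int.emod_add_mul_ediv ((j : ℤ) + (s : ℤ)) (r : ℤ)
      exact ⟨1 - ((j : ℤ) + (s : ℤ)) / (r : ℤ), by linarith⟩
    rw [h1, h2]
  refine ⟨hmain, ?_⟩
  ext a j
  rw [Matrix.mul_apply]
  simp only [Matrix.of_apply, mul_ite, mul_one, mul_zero]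
  have hlt : ((j : ℕ) + s) % r < r := Nat.mod_lt _ (by omega)
  have hcond : ∀ c : Fin r, ((c : ℕ) = ((j : ℕ) + s) % r) = (c = ⟨((j : ℕ) + s) % r, hlt⟩) := by
    intro c; simp [Fin.ext_iff]
  simp only [hcond]
  rw [Finset.sum_ite_eq' Finset.univ (⟨((j : ℕ) + s) % r, hlt⟩ : Fin r)
    (fun c => eigV r s z a c)]
  simp only [Finset.mem_univ, if_true]
  exact hmain a j
end
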